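/- arXiv:1707.01349 — 5 statements merged into one kernel-verified Lean document; each statement's English description precedes it below -/
import Mathlib

section
/- Every admissible pair in (ℝ×ℝ)² is ∼-equivalent to exactly one of the following pairs, and these pairs are pairwise non-equivalent: (1,0); (a,1) for a unique a ∈ ℝ×ℝ; (1, λP₊) for a unique nonzero real λ; (1, λP₋) for a unique nonzero real λ; (P₊,P₋); (P₋,P₊). Moreover, for all real λ₁,λ₂ the pairs (λ₁P₊, λ₂P₊) and (λ₁P₋, λ₂P₋) are not admissible. -/
/-- The double numbers `ℝ ⊕ ℝ`, realized as `ℝ × ℝ` with componentwise operations,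
with `P₊ = (1, 0)` and `P₋ = (0, 1)`. -/
abbrev DoubleNumber := ℝ × ℝ

/-- A pair `(a, b)` over a commutative ring `R` is *admissible* if there exist `c, d ∈ R`
such that `a*d - b*c` is a unit of `R`. -/
def Admissible {R : Type*} [CommRing R] (v : R × R) : Prop :=
  ∃ c d : R, IsUnit (v.1 * d - v.2 * c)

/-- Two pairs are equivalent if one is a unit multiple of the other. -/
def PairEquiv {R : Type*} [CommRing R] (v w : R × R) : Prop :=
  ∃ u : Rˣ, v.1 = (u : R) * w.1 ∧ v.2 = (u : R) * w.2

/-- The list of representatives: `(1,0)`; `(a,1)` for `a ∈ ℝ×ℝ`; `(1, λP₊)` and `(1, λP₋)`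
for nonzero real `λ`; `(P₊, P₋)`; `(P₋, P₊)`. -/
def Reps : Set (DoubleNumber × DoubleNumber) :=
  {((1 : DoubleNumber), (0 : DoubleNumber))} ∪
  {p | ∃ a : DoubleNumber, p = (a, (1 : DoubleNumber))} ∪
  {p | ∃ l : ℝ, l ≠ 0 ∧ p = ((1 : DoubleNumber), ((l, 0) : DoubleNumber))} ∪
  {p | ∃ l : ℝ, l ≠ 0 ∧ p = ((1 : DoubleNumber), ((0, l) : DoubleNumber))} ∪
  {((((1 : ℝ), (0 : ℝ)) : DoubleNumber), (((0 : ℝ), (1 : ℝ)) : DoubleNumber))} ∪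
  {((((0 : ℝ), (1 : ℝ)) : DoubleNumber), (((1 : ℝ), (0 : ℝ)) : DoubleNumber))}

lemma isUnit_DN {x : DoubleNumber} : IsUnit x ↔ x.1 ≠ 0 ∧ x.2 ≠ 0 := by
  constructor
  · rintro ⟨u, rfl⟩
    have h1 := congrArg Prod.fst u.mul_inv
    have h2 := congrArg Prod.snd u.mul_inv
    simp only [Prod.fst_mul, Prod.snd_mul, Prod.fst_one, Prod.snd_one] at h1 h2
    constructor <;> intro h <;> simp [h] at h1 h2
  · rintro ⟨h1, h2⟩
    exact ⟨⟨x, (x.1⁻¹, x.2⁻¹), by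
      ext <;> simp [mul_inv_cancel₀, h1, h2], by
      ext <;> simp [inv_mul_cancel₀, h1, h2]⟩, rfl⟩

lemma pe_comps {v w : DoubleNumber × DoubleNumber} (h : PairEquiv v w) :
    ∃ x y : ℝ, x ≠ 0 ∧ y ≠ 0 ∧ v.1.1 = x * w.1.1 ∧ v.1.2 = y * w.1.2 ∧
      v.2.1 = x * w.2.1 ∧ v.2.2 = y * w.2.2 := by
  obtain ⟨u, h1, h2⟩ := h
  obtain ⟨hx, hy⟩ := isUnit_DN.1 u.isUnit
  exact ⟨(u : DoubleNumber).1, (u : DoubleNumber).2, hx, hy,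
    congrArg Prod.fst h1, congrArg Prod.snd h1,
    congrArg Prod.fst h2, congrArg Prod.snd h2⟩

lemma pe_of {v w : DoubleNumber × DoubleNumber} (x y : ℝ) (hx : x ≠ 0) (hy : y ≠ 0)
    (e11 : v.1.1 = x * w.1.1) (e12 : v.1.2 = y * w.1.2)
    (e21 : v.2.1 = x * w.2.1) (e22 : v.2.2 = y * w.2.2) : PairEquiv v w :=
  ⟨(isUnit_DN.2 ⟨hx, hy⟩ : IsUnit ((x, y) : DoubleNumber)).unit, by
    refine ⟨?_, ?_⟩ <;> ext <;>
      simp only [IsUnit.unit_spec, Prod.fst_mul, Prod.snd_mul] <;> assumption⟩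

lemma mem_Reps {p : DoubleNumber × DoubleNumber} : p ∈ Reps ↔
    p = ((1 : DoubleNumber), (0 : DoubleNumber)) ∨
    (∃ a : DoubleNumber, p = (a, (1 : DoubleNumber))) ∨
    (∃ l : ℝ, l ≠ 0 ∧ p = ((1 : DoubleNumber), ((l, 0) : DoubleNumber))) ∨
    (∃ l : ℝ, l ≠ 0 ∧ p = ((1 : DoubleNumber), ((0, l) : DoubleNumber))) ∨
    p = ((((1 : ℝ), (0 : ℝ)) : DoubleNumber), (((0 : ℝ), (1 : ℝ)) : DoubleNumber)) ∨
    p = ((((0 : ℝ), (1 : ℝ)) : DoubleNumber), (((1 : ℝ), (0 : ℝ)) : DoubleNumber)) := by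
  simp only [Reps, Set.mem_union, Set.mem_singleton_iff, Set.mem_setOf_eq, or_assoc]

/-- Every admissible pair in `(ℝ×ℝ)²` is equivalent to exactly one of the
listed representatives (so the representatives are pairwise non-equivalent and the
parameters `a`, `λ` are unique).  Moreover, for all real `λ₁, λ₂`, the pairs
`(λ₁P₊, λ₂P₊)` and `(λ₁P₋, λ₂P₋)` are not admissible. -/
theorem double_projective_line_classification :
    (∀ v : DoubleNumber × DoubleNumber, Admissible v → ∃! r, r ∈ Reps ∧ PairEquiv v r) ∧
    (∀ l₁ l₂ : ℝ,
      ¬ Admissible ((((l₁, 0) : DoubleNumber), ((l₂, 0) : DoubleNumber))) ∧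
      ¬ Admissible ((((0, l₁) : DoubleNumber), ((0, l₂) : DoubleNumber)))) := by
  constructor
  · rintro ⟨⟨a1, a2⟩, b1, b2⟩ ⟨c, d, hu⟩
    obtain ⟨hu1, hu2⟩ := isUnit_DN.1 hu
    simp only [Prod.fst_sub, Prod.snd_sub, Prod.fst_mul, Prod.snd_mul] at hu1 hu2
    have h1 : a1 ≠ 0 ∨ b1 ≠ 0 := by
      by_contra h; push_neg at h; simp [h.1, h.2] at hu1
    have h2 : a2 ≠ 0 ∨ b2 ≠ 0 := by
      by_contra h; push_neg at h; simp [h.1, h.2] at hu2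
    clear hu hu1 hu2
    by_cases hb1 : b1 = 0 <;> by_cases hb2 : b2 = 0
    · -- b = 0 : rep (1, 0)
      have ha1 : a1 ≠ 0 := h1.resolve_right (by simp [hb1])
      have ha2 : a2 ≠ 0 := h2.resolve_right (by simp [hb2])
      refine ⟨((1 : DoubleNumber), (0 : DoubleNumber)),
        ⟨mem_Reps.2 (Or.inl rfl), pe_of a1 a2 ha1 ha2 (by simp) (by simp)
          (by simp [hb1]) (by simp [hb2])⟩, ?_⟩
      rintro r' ⟨hmem, hpe⟩
      obtain ⟨x, y, hx, hy, e11, e12, e21, e22⟩ := pe_comps hpe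
      clear hpe
      rcases mem_Reps.1 hmem with h | ⟨⟨aa1, aa2⟩, h⟩ | ⟨l, hl, h⟩ | ⟨l, hl, h⟩ | h | h <;>
          clear hmem <;> subst h <;>
        first
          | rfl
          | (simp only [Prod.fst_one, Prod.snd_one, Prod.fst_zero, Prod.snd_zero,
              mul_one, mul_zero] at e11 e12 e21 e22
             simp_all)
    · -- b1 = 0, b2 ≠ 0, so a1 ≠ 0
      have ha1 : a1 ≠ 0 := h1.resolve_right (by simp [hb1])
      by_cases ha2 : a2 = 0
      · -- rep (P₊, P₋)
        refine ⟨((((1:ℝ),(0:ℝ)) : DoubleNumber), (((0:ℝ),(1:ℝ)) : DoubleNumber)),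
          ⟨mem_Reps.2 (by tauto), pe_of a1 b2 ha1 hb2 (by simp) (by simp [ha2])
            (by simp [hb1]) (by simp)⟩, ?_⟩
        rintro r' ⟨hmem, hpe⟩
        obtain ⟨x, y, hx, hy, e11, e12, e21, e22⟩ := pe_comps hpe
        clear hpe
        rcases mem_Reps.1 hmem with h | ⟨⟨aa1, aa2⟩, h⟩ | ⟨l, hl, h⟩ | ⟨l, hl, h⟩ | h | h <;>
            clear hmem <;> subst h <;>
          first
            | rfl
            | (simp only [Prod.fst_one, Prod.snd_one, Prod.fst_zero, Prod.snd_zero,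
                mul_one, mul_zero] at e11 e12 e21 e22
               simp_all)
      · -- rep (1, (0, b2/a2))
        refine ⟨((1 : DoubleNumber), ((0, b2 / a2) : DoubleNumber)),
          ⟨mem_Reps.2 (Or.inr (Or.inr (Or.inr (Or.inl
            ⟨b2 / a2, div_ne_zero hb2 ha2, rfl⟩)))),
          pe_of a1 a2 ha1 ha2 (by simp) (by simp)
            (by simp [hb1]) (by field_simp)⟩, ?_⟩
        rintro r' ⟨hmem, hpe⟩
        obtain ⟨x, y, hx, hy, e11, e12, e21, e22⟩ := pe_comps hpe
        clear hpe
        rcases mem_Reps.1 hmem with h | ⟨⟨aa1, aa2⟩, h⟩ | ⟨l, hl, h⟩ | ⟨l, hl, h⟩ | h | h <;>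
            clear hmem <;> subst h <;>
          first
            | rfl
            | (simp only [Prod.fst_one, Prod.snd_one, Prod.fst_zero, Prod.snd_zero,
                mul_one, mul_zero] at e11 e12 e21 e22
               simp_all)
    · -- b1 ≠ 0, b2 = 0, so a2 ≠ 0
      have ha2 : a2 ≠ 0 := h2.resolve_right (by simp [hb2])
      by_cases ha1 : a1 = 0
      · -- rep (P₋, P₊)
        refine ⟨((((0:ℝ),(1:ℝ)) : DoubleNumber), (((1:ℝ),(0:ℝ)) : DoubleNumber)),
          ⟨mem_Reps.2 (by tauto), pe_of b1 a2 hb1 ha2 (by simp [ha1]) (by simp)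
            (by simp) (by simp [hb2])⟩, ?_⟩
        rintro r' ⟨hmem, hpe⟩
        obtain ⟨x, y, hx, hy, e11, e12, e21, e22⟩ := pe_comps hpe
        clear hpe
        rcases mem_Reps.1 hmem with h | ⟨⟨aa1, aa2⟩, h⟩ | ⟨l, hl, h⟩ | ⟨l, hl, h⟩ | h | h <;>
            clear hmem <;> subst h <;>
          first
            | rfl
            | (simp only [Prod.fst_one, Prod.snd_one, Prod.fst_zero, Prod.snd_zero,
                mul_one, mul_zero] at e11 e12 e21 e22
               simp_all)
      · -- rep (1, (b1/a1, 0))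
        refine ⟨((1 : DoubleNumber), ((b1 / a1, 0) : DoubleNumber)),
          ⟨mem_Reps.2 (Or.inr (Or.inr (Or.inl
            ⟨b1 / a1, div_ne_zero hb1 ha1, rfl⟩))),
          pe_of a1 a2 ha1 ha2 (by simp) (by simp)
            (by field_simp) (by simp [hb2])⟩, ?_⟩
        rintro r' ⟨hmem, hpe⟩
        obtain ⟨x, y, hx, hy, e11, e12, e21, e22⟩ := pe_comps hpe
        clear hpe
        rcases mem_Reps.1 hmem with h | ⟨⟨aa1, aa2⟩, h⟩ | ⟨l, hl, h⟩ | ⟨l, hl, h⟩ | h | h <;>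
            clear hmem <;> subst h <;>
          first
            | rfl
            | (simp only [Prod.fst_one, Prod.snd_one, Prod.fst_zero, Prod.snd_zero,
                mul_one, mul_zero] at e11 e12 e21 e22
               simp_all)
    · -- b1 ≠ 0, b2 ≠ 0 : rep ((a1/b1, a2/b2), 1)
      refine ⟨(((a1 / b1, a2 / b2) : DoubleNumber), (1 : DoubleNumber)),
        ⟨mem_Reps.2 (Or.inr (Or.inl ⟨(a1 / b1, a2 / b2), rfl⟩)),
        pe_of b1 b2 hb1 hb2 (by field_simp) (by field_simp) (by simp) (by simp)⟩, ?_⟩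
      rintro r' ⟨hmem, hpe⟩
      obtain ⟨x, y, hx, hy, e11, e12, e21, e22⟩ := pe_comps hpe
      clear hpe
      rcases mem_Reps.1 hmem with h | ⟨⟨aa1, aa2⟩, h⟩ | ⟨l, hl, h⟩ | ⟨l, hl, h⟩ | h | h <;>
          clear hmem <;> subst h <;>
        first
          | rfl
          | (simp only [Prod.fst_one, Prod.snd_one, Prod.fst_zero, Prod.snd_zero,
              mul_one, mul_zero] at e11 e12 e21 e22
             simp_all)
  · intro l₁ l₂
    constructor <;> rintro ⟨c, d, hu⟩ <;>
      obtain ⟨hu1, hu2⟩ := isUnit_DN.1 hu <;>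
      simp only [Prod.fst_sub, Prod.snd_sub, Prod.fst_mul, Prod.snd_mul] at hu1 hu2 <;>
      simp at hu1 hu2
end

section
/- The nonzero pairs in (ℝ×ℝ)², considered up to the action of GL₂(ℝ×ℝ) combined with ∼-equivalence, form exactly three orbits: (1) the orbit of (1,0), which is precisely the set of admissible pairs; (2) the orbit of (P₊,0), which is precisely the set {(λ₁P₊, λ₂P₊) : λ₁,λ₂ ∈ ℝ not both 0}; (3) the orbit of (P₋,0), which is precisely the set {(λ₁P₋, λ₂P₋) : λ₁,λ₂ ∈ ℝ not both 0}. These three sets are pairwise disjoint and their union is (ℝ×ℝ)²∖{(0,0)}. -/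
/-- The action of a `2 × 2` matrix on a pair viewed as a column vector. -/
def MulAct {R : Type*} [CommRing R] (M : Matrix (Fin 2) (Fin 2) R) (v : R × R) : R × R :=
  (M 0 0 * v.1 + M 0 1 * v.2, M 1 0 * v.1 + M 1 1 * v.2)

/-- The orbit of `w` under the action of `GL₂(R)` combined with `∼`-equivalence:
`v` lies in the orbit of `w` iff there is `M ∈ GL₂(R)` with `M·w ∼ v`. -/
def Orbit {R : Type*} [CommRing R] (w : R × R) : Set (R × R) :=
  {v | ∃ M : Matrix (Fin 2) (Fin 2) R, IsUnit M.det ∧ PairEquiv (MulAct M w) v}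

/-! Over any commutative ring the orbit of `(1, 0)` consists of the first columns of
invertible matrices, i.e. of the admissible pairs, and the orbit of `0` is `{0}`. Over a product
ring `R × S` a pair, a matrix and a unit all split into an `R`-part and an `S`-part, so an orbit
over `R × S` is the product of an orbit over `R` and one over `S`. Over a field the admissible
pairs are the nonzero ones, so each of the three orbits over `ℝ × ℝ` is singled out by which of
the two real components of the pair vanish. -/

section

variable {R S : Type*} [CommRing R] [CommRing S]

theorem mulAct_map (f : R →+* S) (M : Matrix (Fin 2) (Fin 2) R) (v : R × R) :
    (MulAct M v).map f f = MulAct (M.map f) (v.map f f) := by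
  simp [MulAct]

theorem PairEquiv.map (f : R →+* S) {v w : R × R} (h : PairEquiv v w) :
    PairEquiv (v.map f f) (w.map f f) := by
  obtain ⟨u, h₁, h₂⟩ := h
  exact ⟨Units.map f u, by simp [h₁], by simp [h₂]⟩

theorem map_mem_orbit (f : R →+* S) {v w : R × R} (h : v ∈ Orbit w) :
    v.map f f ∈ Orbit (w.map f f) := by
  obtain ⟨M, hM, e⟩ := h
  refine ⟨M.map f, ?_, ?_⟩
  · rw [← RingHom.mapMatrix_apply, ← RingHom.map_det]
    exact hM.map f
  · rw [← mulAct_map]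
    exact e.map f

theorem mem_orbit_prod_iff {v w : (R × S) × (R × S)} :
    v ∈ Orbit w ↔ v.map Prod.fst Prod.fst ∈ Orbit (w.map Prod.fst Prod.fst) ∧
      v.map Prod.snd Prod.snd ∈ Orbit (w.map Prod.snd Prod.snd) := by
  refine ⟨fun h => ⟨map_mem_orbit (RingHom.fst R S) h, map_mem_orbit (RingHom.snd R S) h⟩, ?_⟩
  rintro ⟨⟨M₁, hM₁, u₁, e₁, e₁'⟩, ⟨M₂, hM₂, u₂, e₂, e₂'⟩⟩
  let M : Matrix (Fin 2) (Fin 2) (R × S) := Matrix.of fun i j => (M₁ i j, M₂ i j)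
  have hdet : M.det = (M₁.det, M₂.det) := by
    ext
    · exact (RingHom.fst R S).map_det M
    · exact (RingHom.snd R S).map_det M
  refine ⟨M, ?_, MulEquiv.prodUnits.symm (u₁, u₂), ?_, ?_⟩
  · rw [hdet, Prod.isUnit_iff]
    exact ⟨hM₁, hM₂⟩
  all_goals simp_all [MulAct, M, Prod.ext_iff, MulEquiv.prodUnits]

end

section

variable {R : Type*} [CommRing R]

theorem orbit_one_zero : Orbit ((1 : R), (0 : R)) = {v | Admissible v} := by
  ext v
  constructor
  · rintro ⟨M, hM, u, h₁, h₂⟩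
    simp only [MulAct, mul_one, mul_zero, add_zero] at h₁ h₂
    refine ⟨M 0 1, M 1 1, isUnit_of_mul_isUnit_right (x := (u : R)) ?_⟩
    rw [Matrix.det_fin_two, h₁, h₂] at hM
    convert hM using 1
    ring
  · rintro ⟨c, d, h⟩
    refine ⟨!![v.1, c; v.2, d], ?_, 1, ?_, ?_⟩
    · rw [Matrix.det_fin_two_of]
      convert h using 1
      ring
    all_goals simp [MulAct]

theorem orbit_zero : Orbit (0 : R × R) = {0} := by
  ext v
  constructor
  · rintro ⟨M, -, u, h₁, h₂⟩
    simp only [MulAct, Prod.fst_zero, Prod.snd_zero, mul_zero, add_zero] at h₁ h₂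
    exact Prod.ext (u.mul_right_eq_zero.mp h₁.symm) (u.mul_right_eq_zero.mp h₂.symm)
  · rintro rfl
    exact ⟨1, by simp, 1, by simp [MulAct], by simp [MulAct]⟩

end

theorem admissible_iff_ne_zero {K : Type*} [Field K] {v : K × K} : Admissible v ↔ v ≠ 0 := by
  constructor
  · rintro ⟨c, d, h⟩ rfl
    simp at h
  · intro hv
    by_cases h₁ : v.1 = 0
    · have h₂ : v.2 ≠ 0 := fun h₂ => hv (Prod.ext h₁ h₂)
      exact ⟨-1, 0, by simpa using h₂⟩
    · exact ⟨0, 1, by simpa using h₁⟩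

section

variable {K L : Type*} [Field K] [Field L] {v : (K × L) × (K × L)}

theorem mem_orbit_one_zero_prod_iff :
    v ∈ Orbit ((1 : K × L), (0 : K × L)) ↔
      v.map Prod.fst Prod.fst ≠ 0 ∧ v.map Prod.snd Prod.snd ≠ 0 := by
  rw [mem_orbit_prod_iff]
  simp [orbit_one_zero, admissible_iff_ne_zero]

theorem mem_orbit_mk_one_zero_zero_iff :
    v ∈ Orbit (((1, 0) : K × L), (0 : K × L)) ↔
      v.map Prod.fst Prod.fst ≠ 0 ∧ v.map Prod.snd Prod.snd = 0 := by
  rw [mem_orbit_prod_iff]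
  simp [orbit_one_zero, ← Prod.zero_eq_mk, orbit_zero, admissible_iff_ne_zero]

theorem mem_orbit_mk_zero_one_zero_iff :
    v ∈ Orbit (((0, 1) : K × L), (0 : K × L)) ↔
      v.map Prod.fst Prod.fst = 0 ∧ v.map Prod.snd Prod.snd ≠ 0 := by
  rw [mem_orbit_prod_iff]
  simp [orbit_one_zero, ← Prod.zero_eq_mk, orbit_zero, admissible_iff_ne_zero]

end

/-- The nonzero pairs in `(ℝ×ℝ)²`, up to the action of `GL₂(ℝ×ℝ)`
combined with `∼`-equivalence, form exactly three orbits: the orbit of `(1,0)`, which is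
the set of admissible pairs; the orbit of `(P₊,0)`, which is
`{(λ₁P₊, λ₂P₊) : λ₁, λ₂ not both 0}`; and the orbit of `(P₋,0)`, which is
`{(λ₁P₋, λ₂P₋) : λ₁, λ₂ not both 0}`.  These three sets are pairwise disjoint and their
union is `(ℝ×ℝ)² ∖ {(0,0)}`. -/
theorem double_orbit_decomposition :
    Orbit ((1 : DoubleNumber), (0 : DoubleNumber)) = {v | Admissible v} ∧
    Orbit ((((1 : ℝ), (0 : ℝ)) : DoubleNumber), (0 : DoubleNumber)) =
      {v | ∃ l₁ l₂ : ℝ, (l₁, l₂) ≠ ((0 : ℝ), (0 : ℝ)) ∧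
        v = (((l₁, 0) : DoubleNumber), ((l₂, 0) : DoubleNumber))} ∧
    Orbit ((((0 : ℝ), (1 : ℝ)) : DoubleNumber), (0 : DoubleNumber)) =
      {v | ∃ l₁ l₂ : ℝ, (l₁, l₂) ≠ ((0 : ℝ), (0 : ℝ)) ∧
        v = (((0, l₁) : DoubleNumber), ((0, l₂) : DoubleNumber))} ∧
    Disjoint (Orbit ((1 : DoubleNumber), (0 : DoubleNumber)))
      (Orbit ((((1 : ℝ), (0 : ℝ)) : DoubleNumber), (0 : DoubleNumber))) ∧
    Disjoint (Orbit ((1 : DoubleNumber), (0 : DoubleNumber)))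
      (Orbit ((((0 : ℝ), (1 : ℝ)) : DoubleNumber), (0 : DoubleNumber))) ∧
    Disjoint (Orbit ((((1 : ℝ), (0 : ℝ)) : DoubleNumber), (0 : DoubleNumber)))
      (Orbit ((((0 : ℝ), (1 : ℝ)) : DoubleNumber), (0 : DoubleNumber))) ∧
    Orbit ((1 : DoubleNumber), (0 : DoubleNumber)) ∪
      Orbit ((((1 : ℝ), (0 : ℝ)) : DoubleNumber), (0 : DoubleNumber)) ∪
      Orbit ((((0 : ℝ), (1 : ℝ)) : DoubleNumber), (0 : DoubleNumber)) =
      {v : DoubleNumber × DoubleNumber | v ≠ 0} := by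
  refine ⟨orbit_one_zero, ?_, ?_, ?_, ?_, ?_, ?_⟩
  · ext ⟨⟨a, a'⟩, ⟨b, b'⟩⟩
    simp [mem_orbit_mk_one_zero_zero_iff]
  · ext ⟨⟨a, a'⟩, ⟨b, b'⟩⟩
    simp [mem_orbit_mk_zero_one_zero_iff, and_comm]
  · exact Set.disjoint_left.mpr fun _ h h' =>
      (mem_orbit_one_zero_prod_iff.mp h).2 (mem_orbit_mk_one_zero_zero_iff.mp h').2
  · exact Set.disjoint_left.mpr fun _ h h' =>
      (mem_orbit_one_zero_prod_iff.mp h).1 (mem_orbit_mk_zero_one_zero_iff.mp h').1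
  · exact Set.disjoint_left.mpr fun _ h h' =>
      (mem_orbit_mk_one_zero_zero_iff.mp h).1 (mem_orbit_mk_zero_one_zero_iff.mp h').1
  · ext v
    have hv_zero : v = 0 ↔ v.map Prod.fst Prod.fst = 0 ∧ v.map Prod.snd Prod.snd = 0 := by
      simp [Prod.ext_iff, and_and_and_comm]
    simp only [Set.mem_union, mem_orbit_one_zero_prod_iff, mem_orbit_mk_one_zero_zero_iff,
      mem_orbit_mk_zero_one_zero_iff, Set.mem_ofPred_eq]
    tauto
end

section
/- The nonzero pairs in 𝔻², considered up to the action of GL₂(𝔻) combined with ∼-equivalence, form exactly two orbits: (1) the orbit of (1,0), which is precisely the set of admissible pairs; (2) the orbit of (ε,0), which is precisely the set {(ελ₁, ελ₂) : λ₁,λ₂ ∈ ℝ not both 0}. These two sets are disjoint and their union is 𝔻²∖{(0,0)}. -/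
open TrivSqZeroExt

/-- The dual numbers `𝔻 = ℝ[ε]` with `ε² = 0`. -/
abbrev 𝔻 := DualNumber ℝ

lemma unit_iff (x : 𝔻) : IsUnit x ↔ x.fst ≠ 0 := by
  rw [isUnit_iff_isUnit_fst, isUnit_iff_ne_zero]

lemma mul_eps (x : 𝔻) : x * DualNumber.eps = x.fst • DualNumber.eps := by
  ext <;> simp [DualNumber.snd_mul]

lemma orbit_one : Orbit ((1 : 𝔻), (0 : 𝔻)) = {v | Admissible v} := by
  ext v
  constructor
  · rintro ⟨M, hdet, u, h1, h2⟩
    simp only [MulAct, mul_one, mul_zero, add_zero] at h1 h2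
    refine ⟨M 0 1, M 1 1, ?_⟩
    rw [Matrix.det_fin_two, h1, h2] at hdet
    have : (u : 𝔻) * v.1 * M 1 1 - M 0 1 * ((u : 𝔻) * v.2)
        = (u : 𝔻) * (v.1 * M 1 1 - v.2 * M 0 1) := by ring
    rw [this, Units.isUnit_units_mul] at hdet
    exact hdet
  · rintro ⟨c, d, h⟩
    refine ⟨!![v.1, c; v.2, d], ?_, 1, ?_, ?_⟩
    · rw [Matrix.det_fin_two_of]
      have : v.1 * d - c * v.2 = v.1 * d - v.2 * c := by ring
      rw [this]; exact h
    · simp [MulAct]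
    · simp [MulAct]

lemma orbit_eps : Orbit ((DualNumber.eps : 𝔻), (0 : 𝔻)) =
    {v | ∃ l₁ l₂ : ℝ, (l₁, l₂) ≠ ((0 : ℝ), (0 : ℝ)) ∧
      v = (l₁ • (DualNumber.eps : 𝔻), l₂ • (DualNumber.eps : 𝔻))} := by
  ext v
  constructor
  · rintro ⟨M, hdet, u, h1, h2⟩
    simp only [MulAct, mul_zero, add_zero] at h1 h2
    refine ⟨((↑u⁻¹ : 𝔻) * M 0 0).fst, ((↑u⁻¹ : 𝔻) * M 1 0).fst, ?_, ?_⟩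
    · rw [Matrix.det_fin_two, unit_iff] at hdet
      intro hc
      rw [Prod.mk.injEq, fst_mul, fst_mul, mul_eq_zero, mul_eq_zero] at hc
      have hu : (↑u⁻¹ : 𝔻).fst ≠ 0 := (unit_iff _).mp u⁻¹.isUnit
      have h00 : (M 0 0).fst = 0 := hc.1.resolve_left hu
      have h10 : (M 1 0).fst = 0 := hc.2.resolve_left hu
      apply hdet
      simp [fst_mul, h00, h10]
    · have e1 : v.1 = ((↑u⁻¹ : 𝔻) * M 0 0).fst • DualNumber.eps := by
        rw [← mul_eps, mul_assoc, h1, ← mul_assoc, Units.inv_mul, one_mul]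
      have e2 : v.2 = ((↑u⁻¹ : 𝔻) * M 1 0).fst • DualNumber.eps := by
        rw [← mul_eps, mul_assoc, h2, ← mul_assoc, Units.inv_mul, one_mul]
      exact Prod.ext e1 e2
  · rintro ⟨l₁, l₂, hne, rfl⟩
    by_cases hl : l₁ ≠ 0
    · refine ⟨!![TrivSqZeroExt.inl l₁, 0; TrivSqZeroExt.inl l₂, 1], ?_, 1, ?_, ?_⟩
      · rw [Matrix.det_fin_two_of, unit_iff]
        simpa using hl
      · simp [MulAct, inl_mul_eq_smul]
      · simp [MulAct, inl_mul_eq_smul]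
    · push_neg at hl
      have hl2 : l₂ ≠ 0 := by
        intro h; exact hne (by rw [hl, h])
      refine ⟨!![TrivSqZeroExt.inl l₁, 1; TrivSqZeroExt.inl l₂, 0], ?_, 1, ?_, ?_⟩
      · rw [Matrix.det_fin_two_of, unit_iff]
        simpa using hl2
      · simp [MulAct, inl_mul_eq_smul]
      · simp [MulAct, inl_mul_eq_smul]

/-- The nonzero pairs in `𝔻²`, up to the action of `GL₂(𝔻)` combined
with `∼`-equivalence, form exactly two orbits: the orbit of `(1,0)`, which is the set of
admissible pairs, and the orbit of `(ε,0)`, which is `{(ελ₁, ελ₂) : λ₁, λ₂ not both 0}`.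
These two sets are disjoint and their union is `𝔻² ∖ {(0,0)}`. -/
theorem dual_orbit_decomposition :
    Orbit ((1 : 𝔻), (0 : 𝔻)) = {v | Admissible v} ∧
    Orbit ((DualNumber.eps : 𝔻), (0 : 𝔻)) =
      {v | ∃ l₁ l₂ : ℝ, (l₁, l₂) ≠ ((0 : ℝ), (0 : ℝ)) ∧
        v = (l₁ • (DualNumber.eps : 𝔻), l₂ • (DualNumber.eps : 𝔻))} ∧
    Disjoint (Orbit ((1 : 𝔻), (0 : 𝔻))) (Orbit ((DualNumber.eps : 𝔻), (0 : 𝔻))) ∧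
    Orbit ((1 : 𝔻), (0 : 𝔻)) ∪ Orbit ((DualNumber.eps : 𝔻), (0 : 𝔻)) =
      {v : 𝔻 × 𝔻 | v ≠ 0} := by
  refine ⟨orbit_one, orbit_eps, ?_, ?_⟩
  · rw [orbit_one, orbit_eps, Set.disjoint_left]
    rintro v ⟨c, d, h⟩ ⟨l₁, l₂, hne, rfl⟩
    rw [unit_iff] at h
    apply h
    simp [fst_mul]
  · rw [orbit_one, orbit_eps]
    ext v
    simp only [Set.mem_union, Set.mem_setOf_eq]
    constructor
    · rintro (⟨c, d, h⟩ | ⟨l₁, l₂, hne, rfl⟩)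
      · rintro rfl
        simp only [Prod.fst_zero, Prod.snd_zero, zero_mul, sub_zero] at h
        exact (unit_iff _).mp h (by simp)
      · intro hc
        rw [Prod.mk.injEq] at hc
        apply hne
        have h1 : l₁ = 0 := by
          have := congrArg TrivSqZeroExt.snd hc.1
          simpa using this
        have h2 : l₂ = 0 := by
          have := congrArg TrivSqZeroExt.snd hc.2
          simpa using this
        rw [h1, h2]
    · intro hv
      by_cases h : v.1.fst = 0 ∧ v.2.fst = 0
      · right
        refine ⟨v.1.snd, v.2.snd, ?_, ?_⟩
        · intro hc
          rw [Prod.mk.injEq] at hc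
          apply hv
          refine Prod.ext (TrivSqZeroExt.ext ?_ ?_) (TrivSqZeroExt.ext ?_ ?_) <;>
            simp [h.1, h.2, hc.1, hc.2]
        · refine Prod.ext (TrivSqZeroExt.ext ?_ ?_) (TrivSqZeroExt.ext ?_ ?_) <;>
            simp [h.1, h.2]
      · left
        rw [not_and_or] at h
        rcases h with h | h
        · exact ⟨0, 1, by rw [mul_one, mul_zero, sub_zero, unit_iff]; exact h⟩
        · exact ⟨-1, 0, by rw [mul_zero, mul_neg_one, zero_sub, neg_neg, unit_iff]; exact h⟩
end

section
/- Let B₁ : ℝ → GL₂(ℝ) be a one-parameter subgroup (a group homomorphism from (ℝ,+)) and let B₂ be a 2×2 real matrix. Define B(t) = B₁(t) + ε·t·B₁(t)·B₂, a 2×2 matrix over the dual numbers 𝔻 (its (i,j) entry is (B₁(t))ᵢⱼ + ε·t·(B₁(t)B₂)ᵢⱼ). Then each B(t) lies in GL₂(𝔻), and B satisfies B(t+s) = B(t)B(s) for all t,s ∈ ℝ if and only if B₂ commutes with B₁(s) for every s ∈ ℝ. -/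
open TrivSqZeroExt

/-- The family `B(t) = B₁(t) + ε·t·B₁(t)·B₂` of matrices over the dual numbers, whose
`(i,j)` entry at time `t` is `(B₁(t))ᵢⱼ + ε·t·(B₁(t)B₂)ᵢⱼ`. -/
def dualFamily (B₁ : ℝ → Matrix (Fin 2) (Fin 2) ℝ) (B₂ : Matrix (Fin 2) (Fin 2) ℝ) :
    ℝ → Matrix (Fin 2) (Fin 2) 𝔻 :=
  fun t => Matrix.of fun i j =>
    (inl (B₁ t i j) : 𝔻) + (t * (B₁ t * B₂) i j) • (DualNumber.eps : 𝔻)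

lemma dualFamily_eq (B₁ : ℝ → Matrix (Fin 2) (Fin 2) ℝ) (B₂ : Matrix (Fin 2) (Fin 2) ℝ)
    (t : ℝ) :
    dualFamily B₁ B₂ t = (B₁ t).map (inl : ℝ → 𝔻) + (t • (B₁ t * B₂)).map inr := by
  refine Matrix.ext fun i j => TrivSqZeroExt.ext ?_ ?_ <;>
    simp [dualFamily, Matrix.map_apply, Matrix.smul_apply, smul_eq_mul]

lemma key_mul (A C X Y : Matrix (Fin 2) (Fin 2) ℝ) :
    (A.map (inl : ℝ → 𝔻) + X.map inr) * (C.map (inl : ℝ → 𝔻) + Y.map inr)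
      = (A * C).map (inl : ℝ → 𝔻) + (A * Y + X * C).map inr := by
  refine Matrix.ext fun i j => ?_
  simp only [Matrix.add_apply, Matrix.mul_apply, Matrix.map_apply]
  refine TrivSqZeroExt.ext ?_ ?_
  · rw [fst_sum]
    simp [fst_mul]
  · rw [snd_sum]
    simp [snd_mul, smul_eq_mul, Finset.sum_add_distrib]

lemma addmap_inj {A C X Y : Matrix (Fin 2) (Fin 2) ℝ}
    (h : A.map (inl : ℝ → 𝔻) + X.map inr = C.map (inl : ℝ → 𝔻) + Y.map inr) :
    A = C ∧ X = Y := by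
  constructor <;> ext i j
  · have := congrArg (fun M => TrivSqZeroExt.fst (M i j)) h
    simpa [Matrix.map_apply] using this
  · have := congrArg (fun M => TrivSqZeroExt.snd (M i j)) h
    simpa [Matrix.map_apply] using this

/-- Let `B₁ : ℝ → GL₂(ℝ)` be a one-parameter subgroup and `B₂` a `2×2`
real matrix, and set `B(t) = B₁(t) + ε·t·B₁(t)·B₂` over the dual numbers.  Then every
`B(t)` lies in `GL₂(𝔻)`, and `B(t+s) = B(t)B(s)` for all `t, s` iff `B₂` commutes with
`B₁(s)` for every `s`. -/
theorem dual_one_parameter_family (B₁ : ℝ → Matrix (Fin 2) (Fin 2) ℝ)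
    (B₂ : Matrix (Fin 2) (Fin 2) ℝ)
    (hunit : ∀ t, IsUnit (B₁ t).det)
    (hhom : ∀ t s : ℝ, B₁ (t + s) = B₁ t * B₁ s)
    (h0 : B₁ 0 = 1) :
    (∀ t, IsUnit ((dualFamily B₁ B₂ t).det)) ∧
    ((∀ t s : ℝ, dualFamily B₁ B₂ (t + s) = dualFamily B₁ B₂ t * dualFamily B₁ B₂ s) ↔
      ∀ s : ℝ, B₂ * B₁ s = B₁ s * B₂) := by
  constructor
  · intro t
    rw [isUnit_iff_isUnit_fst]
    have hdet : TrivSqZeroExt.fst (dualFamily B₁ B₂ t).det = (B₁ t).det := by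
      rw [Matrix.det_fin_two, Matrix.det_fin_two]
      simp [dualFamily_eq, Matrix.map_apply, fst_mul]
    exact hdet ▸ hunit t
  · constructor
    · intro h s
      have h1 := h 1 s
      rw [dualFamily_eq, dualFamily_eq, dualFamily_eq, key_mul] at h1
      obtain ⟨-, h2⟩ := addmap_inj h1
      rw [hhom 1 s] at h2
      simp only [one_smul, add_smul, Matrix.mul_smul, mul_assoc] at h2
      rw [add_comm (s • (B₁ 1 * (B₁ s * B₂)))] at h2
      have h4 := add_right_cancel h2
      have hu : IsUnit (B₁ 1) := (Matrix.isUnit_iff_isUnit_det _).mpr (hunit 1)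
      exact (hu.mul_left_cancel h4).symm
    · intro hc t s
      rw [dualFamily_eq, dualFamily_eq, dualFamily_eq, key_mul]
      congr 1
      · rw [hhom]
      · congr 1
        rw [hhom]

        simp only [Matrix.mul_smul, Matrix.smul_mul, mul_assoc, hc s]
        rw [add_smul]
        abel
end

section
/- Let a be a nonzero real number and let y₊, y₋ ∈ ℝ with y₊ − a·y₋ ≠ 0. Let t ∈ ℝ be such that t·y₊ + 1 ≠ 0 and a·t·y₋ + 1 ≠ 0, and set u′ = y₊/(t·y₊ + 1), v′ = y₋/(a·t·y₋ + 1), u = (u′ + v′)/2, v = (u′ − v′)/2 (so that the image of the point y₊P₊ + y₋P₋ under the Möbius transformation with matrix N(t)P₊ + N(at)P₋ is u + jv). Then u² − v² + ((a−1)·y₊·y₋/(y₊ − a·y₋))·u − ((a+1)·y₊·y₋/(y₊ − a·y₋))·v = 0. -/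
/-!
In the null coordinates `u' = u + v`, `v' = u - v` of the double numbers the claimed quadric reads
`u'v' + c (a v' - u') = 0` with `c = y₊y₋/(y₊ - a y₋)`. Since `N(t)` acts by `y ↦ y/(ty + 1)`,
we have `1/u' - t = 1/y₊` and `1/v' - at = 1/y₋`, so `a/u' - 1/v'` does not depend on `t`;
cleared of denominators, this invariance is exactly the equation.
-/

theorem parabolic_orbit_invariant {R : Type*} [CommRing R] {a t yp ym u' v' : R}
    (hu' : u' * (t * yp + 1) = yp) (hv' : v' * (a * t * ym + 1) = ym) :
    yp * ym * (u' - a * v') = (yp - a * ym) * u' * v' := by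
  linear_combination a * ym * v' * hu' - yp * u' * hv'

theorem double_parabolic_orbit_equation_general
    (a yp ym t u' v' u v : ℝ)
    (hy : yp - a * ym ≠ 0)
    (h1 : t * yp + 1 ≠ 0) (h2 : a * t * ym + 1 ≠ 0)
    (hu' : u' = yp / (t * yp + 1)) (hv' : v' = ym / (a * t * ym + 1))
    (hu : u = (u' + v') / 2) (hv : v = (u' - v') / 2) :
    u ^ 2 - v ^ 2 + ((a - 1) * yp * ym / (yp - a * ym)) * u
      - ((a + 1) * yp * ym / (yp - a * ym)) * v = 0 := by
  have hinv : yp * ym * (u' - a * v') = (yp - a * ym) * u' * v' :=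
    parabolic_orbit_invariant (by rw [hu', div_mul_cancel₀ _ h1])
      (by rw [hv', div_mul_cancel₀ _ h2])
  subst hu hv
  calc _ = ((yp - a * ym) * u' * v' - yp * ym * (u' - a * v')) / (yp - a * ym) := by
          field_simp
          ring
    _ = 0 := by rw [hinv, sub_self, zero_div]

/-- Let `a ≠ 0` and `y₊ - a·y₋ ≠ 0` (here `yp = y₊`, `ym = y₋`), and
let `t` be such that `t·y₊ + 1 ≠ 0` and `a·t·y₋ + 1 ≠ 0`.  Set `u′ = y₊/(t·y₊+1)`,
`v′ = y₋/(a·t·y₋+1)`, `u = (u′+v′)/2` and `v = (u′-v′)/2`, so that the image of the point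
`y₊P₊ + y₋P₋` under the Möbius transformation with matrix `N(t)P₊ + N(at)P₋` is `u + jv`.
Then `u² - v² + ((a-1)·y₊·y₋/(y₊-a·y₋))·u - ((a+1)·y₊·y₋/(y₊-a·y₋))·v = 0`. -/
theorem double_parabolic_orbit_equation
    (a yp ym t u' v' u v : ℝ)
    (ha : a ≠ 0) (hy : yp - a * ym ≠ 0)
    (h1 : t * yp + 1 ≠ 0) (h2 : a * t * ym + 1 ≠ 0)
    (hu' : u' = yp / (t * yp + 1)) (hv' : v' = ym / (a * t * ym + 1))
    (hu : u = (u' + v') / 2) (hv : v = (u' - v') / 2) :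
    u ^ 2 - v ^ 2 + ((a - 1) * yp * ym / (yp - a * ym)) * u
      - ((a + 1) * yp * ym / (yp - a * ym)) * v = 0 :=
  double_parabolic_orbit_equation_general a yp ym t u' v' u v hy h1 h2 hu' hv' hu hv
end
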